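/- arXiv:2202.03909 — 9 statements merged into one kernel-verified Lean document; each statement's English description precedes it below -/
import Mathlib

section
/- For σ > 1 and ε ∈ (0,1), the function g(x) = x − x^σ − x^ε + x^{σε} has exactly one zero α in the open interval (0,1). -/
open Real Set

/-!
Write `g x = f x - f (x ^ ε)` with `f y = y - y ^ σ`, which increases strictly up to its peak
`c = σ⁻¹ ^ (σ - 1)⁻¹` and decreases strictly after it. For `0 < x < 1` we have `x < x ^ ε < 1`, so
`f (x ^ ε) - f x` is positive when `x ^ ε ≤ c` (both points left of the peak), negative when
`c ≤ x` (both right of it), and strictly decreasing on `[c ^ ε⁻¹, c]`, where `x ^ ε` has passed the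
peak while `x` has not. The intermediate value theorem on that interval gives the unique zero.
-/

section Unimodal

variable {f : ℝ → ℝ} {c ε : ℝ}

lemma lt_apply_rpow_of_rpow_le (hmono : StrictMonoOn f (Icc 0 c)) (hε : ε ∈ Ioo 0 1) {x : ℝ}
    (hx : x ∈ Ioo 0 1) (hxc : x ^ ε ≤ c) : f x < f (x ^ ε) :=
  have hlt := self_lt_rpow_of_lt_one hx.1 hx.2 hε.2
  hmono ⟨hx.1.le, hlt.le.trans hxc⟩ ⟨(rpow_pos_of_pos hx.1 ε).le, hxc⟩ hlt

lemma apply_rpow_lt_of_le (hanti : StrictAntiOn f (Icc c 1)) (hε : ε ∈ Ioo 0 1) {x : ℝ}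
    (hx : x ∈ Ioo 0 1) (hcx : c ≤ x) : f (x ^ ε) < f x :=
  have hlt := self_lt_rpow_of_lt_one hx.1 hx.2 hε.2
  hanti ⟨hcx, hx.2.le⟩ ⟨hcx.trans hlt.le, (rpow_lt_one hx.1.le hx.2 hε.1).le⟩ hlt

lemma strictAntiOn_apply_rpow_sub (hmono : StrictMonoOn f (Icc 0 c))
    (hanti : StrictAntiOn f (Icc c 1)) (hc : c ∈ Icc 0 1) (hε : 0 < ε) :
    StrictAntiOn (fun x => f (x ^ ε) - f x) (Icc (c ^ ε⁻¹) c) := by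
  intro x hx y hy hxy
  have hx0 : 0 ≤ x := (rpow_nonneg hc.1 _).trans hx.1
  have hcxε : c ≤ x ^ ε := by
    simpa only [rpow_inv_rpow hc.1 hε.ne'] using rpow_le_rpow (rpow_nonneg hc.1 _) hx.1 hε.le
  have hyε : y ^ ε ≤ 1 := rpow_le_one (hx0.trans hxy.le) (hy.2.trans hc.2) hε.le
  have hεxy : x ^ ε < y ^ ε := rpow_lt_rpow hx0 hxy hε
  have hf : f x < f y := hmono ⟨hx0, hx.2⟩ ⟨hx0.trans hxy.le, hy.2⟩ hxy
  have hfε : f (y ^ ε) < f (x ^ ε) :=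
    hanti ⟨hcxε, hεxy.le.trans hyε⟩ ⟨hcxε.trans hεxy.le, hyε⟩ hεxy
  dsimp only
  linarith

theorem existsUnique_apply_rpow_eq_of_unimodal (hc : c ∈ Ioo 0 1) (hε : ε ∈ Ioo 0 1)
    (hf : ContinuousOn f (Icc 0 1)) (hmono : StrictMonoOn f (Icc 0 c))
    (hanti : StrictAntiOn f (Icc c 1)) :
    ∃! x, x ∈ Ioo 0 1 ∧ f (x ^ ε) = f x := by
  set a := c ^ ε⁻¹
  have ha : 0 < a := rpow_pos_of_pos hc.1 _
  have haε : a ^ ε = c := rpow_inv_rpow hc.1.le hε.1.ne'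
  have hac : a < c := by
    simpa using rpow_lt_rpow_of_exponent_gt hc.1 hc.2 ((one_lt_inv₀ hε.1).mpr hε.2)
  have hzero_mem : ∀ x ∈ Ioo 0 1, f (x ^ ε) = f x → x ∈ Ioo a c := by
    refine fun x hx hfx => ⟨?_, ?_⟩
    · by_contra! hxa
      have hxc : x ^ ε ≤ c := haε ▸ rpow_le_rpow hx.1.le hxa hε.1.le
      exact (lt_apply_rpow_of_rpow_le hmono hε hx hxc).ne' hfx
    · by_contra! hcx
      exact (apply_rpow_lt_of_le hanti hε hx hcx).ne hfx
  have hcont : ContinuousOn (fun x => f (x ^ ε) - f x) (Icc a c) := by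
    have hsub : Icc a c ⊆ Icc 0 1 := Icc_subset_Icc ha.le hc.2.le
    refine (hf.comp (continuousOn_id.rpow_const fun _ _ => Or.inr hε.1.le) fun x hx => ?_).sub
      (hf.mono hsub)
    exact ⟨rpow_nonneg (hsub hx).1 _, rpow_le_one (hsub hx).1 (hsub hx).2 hε.1.le⟩
  have hpos : 0 < f (a ^ ε) - f a :=
    sub_pos.mpr (lt_apply_rpow_of_rpow_le hmono hε ⟨ha, hac.trans hc.2⟩ haε.le)
  have hneg : f (c ^ ε) - f c < 0 := sub_neg.mpr (apply_rpow_lt_of_le hanti hε hc le_rfl)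
  obtain ⟨x, hx, hx0⟩ := intermediate_value_Ioo' hac.le hcont ⟨hneg, hpos⟩
  have hanti' := strictAntiOn_apply_rpow_sub hmono hanti (Ioo_subset_Icc_self hc) hε.1
  refine ⟨x, ⟨⟨ha.trans hx.1, hx.2.trans hc.2⟩, sub_eq_zero.mp hx0⟩, fun y ⟨hy, hfy⟩ => ?_⟩
  refine hanti'.injOn (Ioo_subset_Icc_self (hzero_mem y hy hfy)) (Ioo_subset_Icc_self hx) ?_
  simp only [hx0, hfy, sub_self]

end Unimodal

section SubRpow

variable {σ : ℝ}

lemma hasDerivAt_sub_rpow (hσ : 1 ≤ σ) (y : ℝ) :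
    HasDerivAt (fun y => y - y ^ σ) (1 - σ * y ^ (σ - 1)) y :=
  (hasDerivAt_id y).sub (hasDerivAt_rpow_const (Or.inr hσ))

lemma continuous_sub_rpow (hσ : 1 ≤ σ) : Continuous (fun y : ℝ => y - y ^ σ) :=
  continuous_iff_continuousAt.2 fun y => (hasDerivAt_sub_rpow hσ y).continuousAt

lemma mul_rpow_sub_one_inv_rpow_inv (hσ : 1 < σ) : σ * (σ⁻¹ ^ (σ - 1)⁻¹) ^ (σ - 1) = 1 := by
  rw [rpow_inv_rpow (by positivity) (by linarith), mul_inv_cancel₀ (by positivity)]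

lemma strictMonoOn_sub_rpow (hσ : 1 < σ) :
    StrictMonoOn (fun y : ℝ => y - y ^ σ) (Icc 0 (σ⁻¹ ^ (σ - 1)⁻¹)) := by
  refine strictMonoOn_of_deriv_pos (convex_Icc _ _) (continuous_sub_rpow hσ.le).continuousOn
    fun y hy => ?_
  rw [interior_Icc] at hy
  rw [(hasDerivAt_sub_rpow hσ.le y).deriv, sub_pos]
  exact (mul_lt_mul_of_pos_left (rpow_lt_rpow hy.1.le hy.2 (by linarith)) (by linarith)).trans_eq
    (mul_rpow_sub_one_inv_rpow_inv hσ)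

lemma strictAntiOn_sub_rpow (hσ : 1 < σ) :
    StrictAntiOn (fun y : ℝ => y - y ^ σ) (Ici (σ⁻¹ ^ (σ - 1)⁻¹)) := by
  refine strictAntiOn_of_deriv_neg (convex_Ici _) (continuous_sub_rpow hσ.le).continuousOn
    fun y hy => ?_
  rw [interior_Ici] at hy
  rw [(hasDerivAt_sub_rpow hσ.le y).deriv, sub_neg]
  exact (mul_rpow_sub_one_inv_rpow_inv hσ).symm.trans_lt
    (mul_lt_mul_of_pos_left (rpow_lt_rpow (by positivity) hy (by linarith)) (by linarith))

end SubRpow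

/-- For σ > 1 and ε ∈ (0,1), the function g(x) = x − x^σ − x^ε + x^{σε}
has exactly one zero α in the open interval (0,1). -/
theorem stmt_0 (σ ε : ℝ) (hσ : 1 < σ) (hε : ε ∈ Set.Ioo (0:ℝ) 1) :
    ∃! α : ℝ, α ∈ Set.Ioo (0:ℝ) 1 ∧ α - α ^ σ - α ^ ε + α ^ (σ * ε) = 0 := by
  have hpeak : σ⁻¹ ^ (σ - 1)⁻¹ ∈ Ioo 0 1 :=
    ⟨by positivity, rpow_lt_one (by positivity) (inv_lt_one_of_one_lt₀ hσ) (by simpa using hσ)⟩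
  have key := existsUnique_apply_rpow_eq_of_unimodal hpeak hε (continuous_sub_rpow hσ.le).continuousOn
    (strictMonoOn_sub_rpow hσ) ((strictAntiOn_sub_rpow hσ).mono Icc_subset_Ici_self)
  refine (existsUnique_congr fun x => and_congr_right fun hx => ?_).mp key
  rw [mul_comm σ, rpow_mul hx.1.le]
  constructor <;> intro h <;> linarith
end

section
/- For σ > 1, ε ∈ (0,1), and α the unique zero of g(x) = x − x^σ − x^ε + x^{σε} in (0,1), one has g(x) < 0 for 0 < x < α and g(x) > 0 for α < x < 1. -/
/-!
Write `g = powGap σ ε`. Near `0` the term `-x ^ ε` dominates, so `g < 0` on a right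
neighbourhood of `0`; and `g 1 = 0` with `g' 1 = (1 - σ) (1 - ε) < 0`, so `g > 0` on a left
neighbourhood of `1`. Since `g` is continuous and `α` is its only zero in `(0, 1)`, the
intermediate value theorem propagates these signs to all of `(0, α)` and `(α, 1)`.
-/

open Set Filter Topology

section SignOnPreconnected

variable {X α : Type*} [TopologicalSpace X] [LinearOrder α] [TopologicalSpace α]
  [OrderClosedTopology α] {s : Set X} {f : X → α} {c : α} {p : X}

theorem IsPreconnected.forall_lt_of_forall_ne (hs : IsPreconnected s) (hf : ContinuousOn f s)
    (hne : ∀ x ∈ s, f x ≠ c) (hp : p ∈ s) (hfp : f p < c) : ∀ x ∈ s, f x < c := by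
  intro x hx
  by_contra! h
  obtain ⟨z, hz, hfz⟩ := hs.intermediate_value hp hx hf ⟨hfp.le, h⟩
  exact hne z hz hfz

theorem IsPreconnected.forall_gt_of_forall_ne (hs : IsPreconnected s) (hf : ContinuousOn f s)
    (hne : ∀ x ∈ s, f x ≠ c) (hp : p ∈ s) (hfp : c < f p) : ∀ x ∈ s, c < f x := by
  intro x hx
  by_contra! h
  obtain ⟨z, hz, hfz⟩ := hs.intermediate_value hx hp hf ⟨h, hfp.le⟩
  exact hne z hz hfz

end SignOnPreconnected

noncomputable def powGap (σ ε x : ℝ) : ℝ := x - x ^ σ - x ^ ε + x ^ (σ * ε)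

section PowGap

variable {σ ε : ℝ}

theorem continuous_powGap (hσ : 0 ≤ σ) (hε : 0 ≤ ε) : Continuous (powGap σ ε) :=
  ((continuous_id.sub (Real.continuous_rpow_const hσ)).sub (Real.continuous_rpow_const hε)).add
    (Real.continuous_rpow_const (mul_nonneg hσ hε))

theorem powGap_one : powGap σ ε 1 = 0 := by
  simp [powGap]

theorem hasDerivAt_powGap_one : HasDerivAt (powGap σ ε) ((1 - σ) * (1 - ε)) 1 := by
  have hpow (q : ℝ) : HasDerivAt (fun x : ℝ => x ^ q) q 1 := by
    simpa using Real.hasDerivAt_rpow_const (p := q) (Or.inl one_ne_zero)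
  exact ((((hasDerivAt_id (1 : ℝ)).sub (hpow σ)).sub (hpow ε)).add (hpow (σ * ε))).congr_deriv
    (by ring)

theorem powGap_eq_rpow_mul {x : ℝ} (hx : 0 < x) :
    powGap σ ε x = x ^ ε * (x ^ (1 - ε) - x ^ (σ - ε) - 1 + x ^ (σ * ε - ε)) := by
  simp only [powGap, mul_add, mul_sub, mul_one, ← Real.rpow_add hx, add_sub_cancel,
    Real.rpow_one]

theorem eventually_powGap_neg_nhdsGT_zero (hσ : 1 < σ) (hε : ε ∈ Ioo (0 : ℝ) 1) :
    ∀ᶠ x in 𝓝[>] 0, powGap σ ε x < 0 := by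
  obtain ⟨hε0, hε1⟩ := hε
  have hzero {q : ℝ} (hq : 0 < q) : Tendsto (fun x : ℝ => x ^ q) (𝓝[>] 0) (𝓝 0) := by
    simpa [Real.zero_rpow hq.ne'] using
      (Real.continuous_rpow_const hq.le).continuousWithinAt (s := Ioi 0) (x := 0) |>.tendsto
  have hcofactor : Tendsto (fun x : ℝ => x ^ (1 - ε) - x ^ (σ - ε) - 1 + x ^ (σ * ε - ε))
      (𝓝[>] 0) (𝓝 (-1)) := by
    have h1 : 0 < σ - ε := by linarith
    have h2 : 0 < σ * ε - ε := by nlinarith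
    simpa using (((hzero (sub_pos.2 hε1)).sub (hzero h1)).sub
      (tendsto_const_nhds (x := (1 : ℝ)))).add (hzero h2)
  filter_upwards [hcofactor.eventually (eventually_lt_nhds neg_one_lt_zero),
    self_mem_nhdsWithin] with x hneg (hx : 0 < x)
  rw [powGap_eq_rpow_mul hx]
  exact mul_neg_of_pos_of_neg (Real.rpow_pos_of_pos hx ε) hneg

theorem eventually_powGap_pos_nhdsLT_one (hσ : 1 < σ) (hε : ε < 1) :
    ∀ᶠ x in 𝓝[<] 1, 0 < powGap σ ε x := by
  have hderiv : deriv (powGap σ ε) 1 < 0 := by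
    rw [hasDerivAt_powGap_one.deriv]
    exact mul_neg_of_neg_of_pos (by linarith) (by linarith)
  filter_upwards
    [nhdsWithin_le_nhds (eventually_nhdsWithin_sign_eq_of_deriv_neg hderiv powGap_one),
    self_mem_nhdsWithin] with x hsign (hx : x < 1)
  rwa [sign_pos (sub_pos.2 hx), sign_eq_one_iff] at hsign

end PowGap

theorem stmt_1_general (σ ε α : ℝ) (hσ : 1 < σ) (hε : ε ∈ Set.Ioo (0:ℝ) 1)
    (hα : α ∈ Set.Ioo (0:ℝ) 1)
    (huniq : ∀ x ∈ Set.Ioo (0:ℝ) 1, x - x ^ σ - x ^ ε + x ^ (σ * ε) = 0 → x = α) :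
    (∀ x : ℝ, 0 < x → x < α → x - x ^ σ - x ^ ε + x ^ (σ * ε) < 0) ∧
    (∀ x : ℝ, α < x → x < 1 → 0 < x - x ^ σ - x ^ ε + x ^ (σ * ε)) := by
  obtain ⟨hα0, hα1⟩ := hα
  have hcont {a b : ℝ} : ContinuousOn (powGap σ ε) (Ioo a b) :=
    (continuous_powGap (by linarith) hε.1.le).continuousOn
  have hne : ∀ x ∈ Ioo (0 : ℝ) 1, x ≠ α → powGap σ ε x ≠ 0 := fun x hx hxα h =>
    hxα (huniq x hx h)
  constructor
  · obtain ⟨p, hp, hpmem⟩ :=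
      ((eventually_powGap_neg_nhdsGT_zero hσ hε).and (Ioo_mem_nhdsGT hα0)).exists
    exact fun x hx0 hxα => isPreconnected_Ioo.forall_lt_of_forall_ne hcont
      (fun z hz => hne z ⟨hz.1, hz.2.trans hα1⟩ hz.2.ne) hpmem hp x ⟨hx0, hxα⟩
  · obtain ⟨q, hq, hqmem⟩ :=
      ((eventually_powGap_pos_nhdsLT_one hσ hε.2).and (Ioo_mem_nhdsLT hα1)).exists
    exact fun x hαx hx1 => isPreconnected_Ioo.forall_gt_of_forall_ne hcont
      (fun z hz => hne z ⟨hα0.trans hz.1, hz.2⟩ hz.1.ne') hqmem hq x ⟨hαx, hx1⟩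

/-- If α is the unique zero in (0,1) of g(x) = x − x^σ − x^ε + x^{σε},
then g < 0 on (0,α) and g > 0 on (α,1). -/
theorem stmt_1 (σ ε α : ℝ) (hσ : 1 < σ) (hε : ε ∈ Set.Ioo (0:ℝ) 1)
    (hα : α ∈ Set.Ioo (0:ℝ) 1) (hroot : α - α ^ σ - α ^ ε + α ^ (σ * ε) = 0)
    (huniq : ∀ x ∈ Set.Ioo (0:ℝ) 1, x - x ^ σ - x ^ ε + x ^ (σ * ε) = 0 → x = α) :
    (∀ x : ℝ, 0 < x → x < α → x - x ^ σ - x ^ ε + x ^ (σ * ε) < 0) ∧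
    (∀ x : ℝ, α < x → x < 1 → 0 < x - x ^ σ - x ^ ε + x ^ (σ * ε)) :=
  stmt_1_general σ ε α hσ hε hα huniq
end

section
/- Let N₁, N₂, v, ε, σ, r be positive reals with N₁ + N₂ = 1, v ≤ N₁, ε < 1, σ > 1. Define h₁(Z) = 1 − (N₁−v)e^{−rZ} − N₂ e^{−σrZ} − v e^{−εrZ} − Z on [0,1]. Then h₁ has a zero Z ∈ (0,1) if and only if r > 1/((N₁−v) + σN₂ + εv), and in that case the zero in (0,1) is unique. -/
/-!
The residual `h₁` of the final-size equation vanishes at `0`, is negative at `1` and is strictly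
concave, being affine minus a positive combination of decaying exponentials. A strictly concave
function takes the value `h₁ 0` at most once more to the right of `0`, and it does so on `(0, 1)`
exactly when its slope at `0`, namely `r ((N₁ - v) + σ N₂ + ε v) - 1`, is positive: a positive
slope makes `h₁` positive near `0` and the intermediate value theorem gives a root before `1`,
while a root `Z` forces `0 = h₁ Z / Z < h₁' 0`.
-/

open Real Set Filter Topology

section StrictConcave

variable {f : ℝ → ℝ} {S : Set ℝ} {a b f' : ℝ}

lemma exists_Ioo_lt_apply_of_hasDerivAt_pos (hd : HasDerivAt f f' a) (hf' : 0 < f') (hab : a < b) :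
    ∃ x ∈ Ioo a b, f a < f x := by
  have hslope : ∀ᶠ x in 𝓝[>] a, 0 < slope f a x :=
    (hasDerivAt_iff_tendsto_slope.mp hd |>.mono_left (nhdsGT_le_nhdsNE a)).eventually
      (eventually_gt_nhds hf')
  obtain ⟨x, hpos, hx⟩ := (hslope.and (Ioo_mem_nhdsGT hab)).exists
  rw [slope_def_field, div_pos_iff_of_pos_right (sub_pos.mpr hx.1)] at hpos
  exact ⟨x, hx, sub_pos.mp hpos⟩

lemma exists_Ioo_apply_eq_left_of_hasDerivAt_pos (hc : ContinuousOn f (Icc a b))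
    (hd : HasDerivAt f f' a) (hf' : 0 < f') (hab : a < b) (hb : f b < f a) :
    ∃ z ∈ Ioo a b, f z = f a := by
  obtain ⟨x, hx, hfx⟩ := exists_Ioo_lt_apply_of_hasDerivAt_pos hd hf' hab
  obtain ⟨z, hz, hfz⟩ := intermediate_value_Ioo' hx.2.le
    (hc.mono (Icc_subset_Icc hx.1.le le_rfl)) ⟨hb, hfx⟩
  exact ⟨z, ⟨hx.1.trans hz.1, hz.2⟩, hfz⟩

lemma StrictConcaveOn.pos_of_hasDerivAt_of_apply_eq (hf : StrictConcaveOn ℝ S f) {z : ℝ}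
    (ha : a ∈ S) (hz : z ∈ S) (haz : a < z) (hfz : f z = f a) (hd : HasDerivAt f f' a) :
    0 < f' := by
  simpa [slope_def_field, hfz] using hf.slope_lt_of_hasDerivAt ha hz haz hd

lemma StrictConcaveOn.eq_of_apply_eq_of_lt (hf : StrictConcaveOn ℝ S f) {x y : ℝ} (ha : a ∈ S)
    (hx : x ∈ S) (hy : y ∈ S) (hax : a < x) (hay : a < y) (hfx : f x = f a) (hfy : f y = f a) :
    x = y := by
  by_contra hxy
  rcases lt_or_gt_of_ne hxy with h | h
  · simpa [hfx, hfy] using hf.secant_strict_mono ha hx hy hax.ne' hay.ne' h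
  · simpa [hfx, hfy] using hf.secant_strict_mono ha hy hx hay.ne' hax.ne' h

end StrictConcave

lemma strictConvexOn_const_mul_exp_mul {c k : ℝ} (hc : 0 < c) (hk : k ≠ 0) :
    StrictConvexOn ℝ univ fun z => c * exp (k * z) := by
  refine ⟨convex_univ, fun x _ y _ hxy s t hs ht hst => ?_⟩
  have hexp := strictConvexOn_exp.2 trivial trivial ((mul_right_injective₀ hk).ne hxy) hs ht hst
  simp only [smul_eq_mul] at hexp ⊢
  calc c * exp (k * (s * x + t * y)) = c * exp (s * (k * x) + t * (k * y)) := by ring_nf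
    _ < c * (s * exp (k * x) + t * exp (k * y)) := mul_lt_mul_of_pos_left hexp hc
    _ = s * (c * exp (k * x)) + t * (c * exp (k * y)) := by ring

lemma convexOn_const_mul_exp_mul {c : ℝ} (hc : 0 ≤ c) (k : ℝ) :
    ConvexOn ℝ univ fun z => c * exp (k * z) := by
  rcases hc.eq_or_lt with rfl | hc
  · simpa using convexOn_const (0 : ℝ) convex_univ
  rcases eq_or_ne k 0 with rfl | hk
  · simpa using convexOn_const c convex_univ
  exact (strictConvexOn_const_mul_exp_mul hc hk).convexOn

/-- The function `h₁` of the final-size equation. -/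
noncomputable def finalSizeResidual (N₁ N₂ v ε σ r Z : ℝ) : ℝ :=
  1 - (N₁ - v) * exp (-r * Z) - N₂ * exp (-σ * r * Z) - v * exp (-ε * r * Z) - Z

section FinalSizeResidual

variable {N₁ N₂ v ε σ r : ℝ}

lemma finalSizeResidual_zero (hsum : N₁ + N₂ = 1) : finalSizeResidual N₁ N₂ v ε σ r 0 = 0 := by
  simp only [finalSizeResidual, mul_zero, exp_zero]
  linarith

lemma finalSizeResidual_one_neg (hN₂ : 0 < N₂) (hv : 0 < v) (hvN : v ≤ N₁) :
    finalSizeResidual N₁ N₂ v ε σ r 1 < 0 := by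
  have h₁ : 0 ≤ (N₁ - v) * exp (-r * 1) := mul_nonneg (sub_nonneg.mpr hvN) (exp_pos _).le
  have h₂ : 0 < N₂ * exp (-σ * r * 1) := mul_pos hN₂ (exp_pos _)
  have h₃ : 0 < v * exp (-ε * r * 1) := mul_pos hv (exp_pos _)
  unfold finalSizeResidual
  linarith

lemma continuous_finalSizeResidual : Continuous (finalSizeResidual N₁ N₂ v ε σ r) := by
  unfold finalSizeResidual
  fun_prop

lemma hasDerivAt_finalSizeResidual_zero :
    HasDerivAt (finalSizeResidual N₁ N₂ v ε σ r) (r * ((N₁ - v) + σ * N₂ + ε * v) - 1) 0 := by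
  have hexp (c k : ℝ) : HasDerivAt (fun z => c * exp (k * z)) (c * k) 0 := by
    simpa using (((hasDerivAt_id (0 : ℝ)).const_mul k).exp).const_mul c
  refine ((((hasDerivAt_const (0 : ℝ) (1 : ℝ)).sub (hexp (N₁ - v) (-r))).sub
    (hexp N₂ (-σ * r))).sub (hexp v (-ε * r))).sub (hasDerivAt_id 0) |>.congr_deriv ?_
  ring

lemma strictConcaveOn_finalSizeResidual (hN₂ : 0 < N₂) (hv : 0 ≤ v) (hvN : v ≤ N₁)
    (hσ : σ ≠ 0) (hr : r ≠ 0) :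
    StrictConcaveOn ℝ univ (finalSizeResidual N₁ N₂ v ε σ r) := by
  have hexps : StrictConvexOn ℝ univ fun z =>
      (N₁ - v) * exp (-r * z) + N₂ * exp (-σ * r * z) + v * exp (-ε * r * z) :=
    ((convexOn_const_mul_exp_mul (sub_nonneg.mpr hvN) _).add_strictConvexOn
      (strictConvexOn_const_mul_exp_mul hN₂ (by simp [hσ, hr]))).add_convexOn
      (convexOn_const_mul_exp_mul hv _)
  refine ((concaveOn_const (1 : ℝ) convex_univ).sub (convexOn_id convex_univ)).sub_strictConvexOn
    hexps |>.congr fun Z _ => ?_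
  simp only [finalSizeResidual, Pi.sub_apply, id]
  ring

end FinalSizeResidual

theorem stmt_5_general (N₁ N₂ v ε σ r : ℝ) (hN₂ : 0 < N₂) (hv : 0 < v)
    (hε : 0 < ε) (hσpos : 0 < σ) (hr : 0 < r) (hsum : N₁ + N₂ = 1)
    (hvN : v ≤ N₁) :
    ((∃ Z ∈ Set.Ioo (0:ℝ) 1,
        1 - (N₁ - v) * Real.exp (-r * Z) - N₂ * Real.exp (-σ * r * Z)
          - v * Real.exp (-ε * r * Z) - Z = 0) ↔
      1 / ((N₁ - v) + σ * N₂ + ε * v) < r) ∧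
    (1 / ((N₁ - v) + σ * N₂ + ε * v) < r →
      ∃! Z : ℝ, Z ∈ Set.Ioo (0:ℝ) 1 ∧
        1 - (N₁ - v) * Real.exp (-r * Z) - N₂ * Real.exp (-σ * r * Z)
          - v * Real.exp (-ε * r * Z) - Z = 0) := by
  have hconc : StrictConcaveOn ℝ univ (finalSizeResidual N₁ N₂ v ε σ r) :=
    strictConcaveOn_finalSizeResidual hN₂ hv.le hvN hσpos.ne' hr.ne'
  have h0 : finalSizeResidual N₁ N₂ v ε σ r 0 = 0 := finalSizeResidual_zero hsum
  have hthreshold : 1 / ((N₁ - v) + σ * N₂ + ε * v) < r ↔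
      0 < r * ((N₁ - v) + σ * N₂ + ε * v) - 1 := by
    have hD : 0 < (N₁ - v) + σ * N₂ + ε * v := by
      linarith [mul_pos hσpos hN₂, mul_pos hε hv]
    rw [div_lt_iff₀ hD, sub_pos]
  have hexists (hpos : 0 < r * ((N₁ - v) + σ * N₂ + ε * v) - 1) :
      ∃ Z ∈ Ioo (0 : ℝ) 1, finalSizeResidual N₁ N₂ v ε σ r Z = 0 := by
    simpa [h0] using exists_Ioo_apply_eq_left_of_hasDerivAt_pos
      continuous_finalSizeResidual.continuousOn hasDerivAt_finalSizeResidual_zero hpos one_pos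
      ((finalSizeResidual_one_neg hN₂ hv hvN).trans_eq h0.symm)
  refine ⟨⟨fun ⟨Z, hZ, hZ0⟩ => hthreshold.mpr ?_, fun hr₁ => hexists (hthreshold.mp hr₁)⟩,
    fun hr₁ => ?_⟩
  · exact hconc.pos_of_hasDerivAt_of_apply_eq trivial trivial hZ.1 (hZ0.trans h0.symm)
      hasDerivAt_finalSizeResidual_zero
  · obtain ⟨Z, hZ, hZ0⟩ := hexists (hthreshold.mp hr₁)
    refine ⟨Z, ⟨hZ, hZ0⟩, fun W ⟨hW, hW0⟩ => ?_⟩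
    exact hconc.eq_of_apply_eq_of_lt trivial trivial trivial hW.1 hZ.1
      (hW0.trans h0.symm) (hZ0.trans h0.symm)

/-- Existence/uniqueness of a nontrivial solution of the final size equation
when all vaccine is allocated to group 1, iff r exceeds the threshold r₁. -/
theorem stmt_5 (N₁ N₂ v ε σ r : ℝ) (hN₁ : 0 < N₁) (hN₂ : 0 < N₂) (hv : 0 < v)
    (hε : 0 < ε) (hσpos : 0 < σ) (hr : 0 < r) (hsum : N₁ + N₂ = 1)
    (hvN : v ≤ N₁) (hε1 : ε < 1) (hσ : 1 < σ) :
    ((∃ Z ∈ Set.Ioo (0:ℝ) 1,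
        1 - (N₁ - v) * Real.exp (-r * Z) - N₂ * Real.exp (-σ * r * Z)
          - v * Real.exp (-ε * r * Z) - Z = 0) ↔
      1 / ((N₁ - v) + σ * N₂ + ε * v) < r) ∧
    (1 / ((N₁ - v) + σ * N₂ + ε * v) < r →
      ∃! Z : ℝ, Z ∈ Set.Ioo (0:ℝ) 1 ∧
        1 - (N₁ - v) * Real.exp (-r * Z) - N₂ * Real.exp (-σ * r * Z)
          - v * Real.exp (-ε * r * Z) - Z = 0) :=
  stmt_5_general N₁ N₂ v ε σ r hN₂ hv hε hσpos hr hsum hvN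
end

section
/- Under σ > 1, ε ∈ (0,1), 0 < v < min(N₁,N₂), N₁+N₂=1, one has 1/((N₁−v) + σN₂ + εv) < 1/(N₁ + σ(N₂−v) + σεv); i.e., the epidemic threshold r₁ for vaccinating group 1 is strictly less than the threshold r₂ for vaccinating group 2. -/
lemma threshold_denominators_sub (σ ε N₁ N₂ v : ℝ) :
    ((N₁ - v) + σ * N₂ + ε * v) - (N₁ + σ * (N₂ - v) + σ * ε * v) = (σ - 1) * (1 - ε) * v := by
  ring

lemma threshold_denominator_pos {σ ε N₁ N₂ v : ℝ} (hσ : 0 < σ) (hε : 0 < ε) (hN₁ : 0 < N₁)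
    (hv : 0 < v) (hvN₂ : v < N₂) : 0 < N₁ + σ * (N₂ - v) + σ * ε * v := by
  have := mul_pos hσ (sub_pos.2 hvN₂)
  have := mul_pos (mul_pos hσ hε) hv
  linarith

theorem stmt_7_general (σ ε N₁ N₂ v : ℝ) (hσ : 1 < σ) (hε : ε ∈ Set.Ioo (0:ℝ) 1)
    (hN₁ : 0 < N₁)
    (hv : 0 < v) (hvmin : v < min N₁ N₂) :
    1 / ((N₁ - v) + σ * N₂ + ε * v) < 1 / (N₁ + σ * (N₂ - v) + σ * ε * v) := by
  obtain ⟨hε₀, hε₁⟩ := hε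
  have hvN₂ : v < N₂ := hvmin.trans_le (min_le_right _ _)
  have hgap : 0 < (σ - 1) * (1 - ε) * v := mul_pos (mul_pos (sub_pos.2 hσ) (sub_pos.2 hε₁)) hv
  refine one_div_lt_one_div_of_lt
    (threshold_denominator_pos (by linarith) hε₀ hN₁ hv hvN₂) ?_
  linarith [threshold_denominators_sub σ ε N₁ N₂ v]

/-- The epidemic threshold for vaccinating group 1 is strictly below
the threshold for vaccinating group 2: r₁ < r₂. -/
theorem stmt_7 (σ ε N₁ N₂ v : ℝ) (hσ : 1 < σ) (hε : ε ∈ Set.Ioo (0:ℝ) 1)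
    (hN₁ : 0 < N₁) (hN₂ : 0 < N₂) (hsum : N₁ + N₂ = 1)
    (hv : 0 < v) (hvmin : v < min N₁ N₂) :
    1 / ((N₁ - v) + σ * N₂ + ε * v) < 1 / (N₁ + σ * (N₂ - v) + σ * ε * v) :=
  stmt_7_general σ ε N₁ N₂ v hσ hε hN₁ hv hvmin
end

section
/- Let σ > 1, ε ∈ (0,1), and let α ∈ (0,1) satisfy α − α^σ − α^ε + α^{σε} = 0; set κ = ln(1/α). Fix N₁, N₂ > 0 with N₁+N₂=1, v > 0, and r > 0. Define f₁(Z) = 1 − (N₁−v)e^{−rZ} − N₂ e^{−σrZ} − v e^{−εrZ} and f₂(Z) = 1 − N₁ e^{−rZ} − (N₂−v)e^{−σrZ} − v e^{−σεrZ}. Then f₁(Z) > f₂(Z) for 0 < Z < κ/r and f₂(Z) > f₁(Z) for Z > κ/r. -/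
/-!
With `x = exp (-r * Z)`, `f₁ - f₂ = v * g x` where `g x = x - x ^ σ - x ^ ε + x ^ (σ * ε)`.
On `(0, 1)` we have `g x = (x ^ ε - x ^ (σ * ε)) * (R x - 1)` with
`R x = (x - x ^ σ) / (x ^ ε - x ^ (σ * ε)) = x ^ (1 - ε) * (y ^ (1 / ε) - 1) / (y - 1)`,
`y = x ^ ((σ - 1) * ε)`. The last factor is a secant slope through `1` of the convex function
`y ↦ y ^ (1 / ε)`, hence monotone in `y`, so `R` is strictly increasing on `(0, 1)`. As
`R α = 1`, the gap `g` changes sign exactly at `α = exp (-κ)`.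
-/

open Real Set

lemma secant_rpow_monotoneOn {p : ℝ} (hp : 1 ≤ p) :
    MonotoneOn (fun y : ℝ => (y ^ p - 1) / (y - 1)) (Ici 0 \ {1}) := by
  intro y hy z hz hyz
  simpa using (convexOn_rpow hp).secant_mono (a := 1) (by simp) hy.1 hz.1 hy.2 hz.2 hyz

noncomputable def allocGap (σ ε x : ℝ) : ℝ := x - x ^ σ - x ^ ε + x ^ (σ * ε)

noncomputable def allocRatio (σ ε x : ℝ) : ℝ := (x - x ^ σ) / (x ^ ε - x ^ (σ * ε))

section

variable {σ ε α x : ℝ}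

lemma rpow_sub_rpow_mul_pos (hσ : 1 < σ) (hε : 0 < ε) (hx : x ∈ Ioo 0 1) :
    0 < x ^ ε - x ^ (σ * ε) :=
  sub_pos.2 (rpow_lt_rpow_of_exponent_gt hx.1 hx.2 (by nlinarith))

lemma allocGap_eq_mul (hσ : 1 < σ) (hε : 0 < ε) (hx : x ∈ Ioo 0 1) :
    allocGap σ ε x = (x ^ ε - x ^ (σ * ε)) * (allocRatio σ ε x - 1) := by
  have hD := (rpow_sub_rpow_mul_pos hσ hε hx).ne'
  unfold allocGap allocRatio
  field_simp
  ring

lemma allocRatio_eq (hε : 0 < ε) (hx0 : 0 < x) :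
    allocRatio σ ε x = x ^ (1 - ε) *
      (((x ^ ((σ - 1) * ε)) ^ ε⁻¹ - 1) / (x ^ ((σ - 1) * ε) - 1)) := by
  have hnum : x - x ^ σ = x ^ (1 - ε) * x ^ ε * (1 - x ^ (σ - 1)) := by
    rw [← rpow_add hx0, mul_one_sub, ← rpow_add hx0]; ring_nf; simp only [rpow_one]; ring
  have hden : x ^ ε - x ^ (σ * ε) = x ^ ε * (1 - x ^ ((σ - 1) * ε)) := by
    rw [mul_one_sub, ← rpow_add hx0]; ring_nf
  have hinv : (x ^ ((σ - 1) * ε)) ^ ε⁻¹ = x ^ (σ - 1) := by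
    rw [← rpow_mul hx0.le, mul_inv_cancel_right₀ hε.ne']
  have hb : x ^ ε ≠ 0 := (rpow_pos_of_pos hx0 ε).ne'
  rw [allocRatio, hnum, hden, hinv, mul_comm (x ^ (1 - ε)), mul_assoc, mul_div_mul_left _ _ hb,
    mul_div_assoc, ← neg_div_neg_eq, neg_sub, neg_sub]

lemma allocRatio_strictMonoOn (hσ : 1 < σ) (hε : ε ∈ Ioo 0 1) :
    StrictMonoOn (allocRatio σ ε) (Ioo 0 1) := by
  have hk : 0 < (σ - 1) * ε := mul_pos (by linarith) hε.1
  have hpow : ∀ z ∈ Ioo (0 : ℝ) 1, z ^ ((σ - 1) * ε) ∈ Ioo (0 : ℝ) 1 := fun z hz =>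
    ⟨rpow_pos_of_pos hz.1 _, rpow_lt_one hz.1.le hz.2 hk⟩
  have hsub : Ioo (0 : ℝ) 1 ⊆ Ici 0 \ {1} := fun z hz => ⟨hz.1.le, hz.2.ne⟩
  intro x hx y hy hxy
  rw [allocRatio_eq hε.1 hx.1, allocRatio_eq hε.1 hy.1]
  refine mul_lt_mul (rpow_lt_rpow hx.1.le hxy (by linarith [hε.2])) ?_ ?_
    (rpow_nonneg hy.1.le _)
  · exact secant_rpow_monotoneOn ((one_le_inv₀ hε.1).2 hε.2.le) (hsub (hpow x hx))
      (hsub (hpow y hy)) (rpow_le_rpow hx.1.le hxy.le hk.le)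
  · obtain ⟨h0, h1⟩ := hpow x hx
    exact div_pos_of_neg_of_neg (sub_neg.2 (rpow_lt_one h0.le h1 (inv_pos.2 hε.1)))
      (sub_neg.2 h1)

lemma allocRatio_eq_one_of_allocGap_eq_zero (hσ : 1 < σ) (hε : 0 < ε) (hα : α ∈ Ioo 0 1)
    (hroot : allocGap σ ε α = 0) : allocRatio σ ε α = 1 := by
  rw [allocGap_eq_mul hσ hε hα, mul_eq_zero] at hroot
  exact sub_eq_zero.1 (hroot.resolve_left (rpow_sub_rpow_mul_pos hσ hε hα).ne')

lemma allocGap_pos_iff (hσ : 1 < σ) (hε : ε ∈ Ioo 0 1) (hα : α ∈ Ioo 0 1)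
    (hroot : allocGap σ ε α = 0) (hx : x ∈ Ioo 0 1) : 0 < allocGap σ ε x ↔ α < x := by
  rw [allocGap_eq_mul hσ hε.1 hx, mul_pos_iff_of_pos_left (rpow_sub_rpow_mul_pos hσ hε.1 hx),
    sub_pos, ← allocRatio_eq_one_of_allocGap_eq_zero hσ hε.1 hα hroot]
  exact (allocRatio_strictMonoOn hσ hε).lt_iff_lt hα hx

lemma allocGap_neg_iff (hσ : 1 < σ) (hε : ε ∈ Ioo 0 1) (hα : α ∈ Ioo 0 1)
    (hroot : allocGap σ ε α = 0) (hx : x ∈ Ioo 0 1) : allocGap σ ε x < 0 ↔ x < α := by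
  rw [allocGap_eq_mul hσ hε.1 hx, ← smul_eq_mul,
    smul_neg_iff_of_pos_left (rpow_sub_rpow_mul_pos hσ hε.1 hx),
    sub_neg, ← allocRatio_eq_one_of_allocGap_eq_zero hσ hε.1 hα hroot]
  exact (allocRatio_strictMonoOn hσ hε).lt_iff_lt hx hα

end

theorem stmt_8_general (σ ε α N₁ N₂ v r : ℝ) (hσ : 1 < σ) (hε : ε ∈ Set.Ioo (0:ℝ) 1)
    (hα : α ∈ Set.Ioo (0:ℝ) 1) (hroot : α - α ^ σ - α ^ ε + α ^ (σ * ε) = 0)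
    (hv : 0 < v) (hr : 0 < r) :
    (∀ Z : ℝ, 0 < Z → Z < Real.log (1 / α) / r →
      1 - N₁ * Real.exp (-r * Z) - (N₂ - v) * Real.exp (-σ * r * Z)
          - v * Real.exp (-σ * ε * r * Z)
        < 1 - (N₁ - v) * Real.exp (-r * Z) - N₂ * Real.exp (-σ * r * Z)
          - v * Real.exp (-ε * r * Z)) ∧
    (∀ Z : ℝ, Real.log (1 / α) / r < Z →
      1 - (N₁ - v) * Real.exp (-r * Z) - N₂ * Real.exp (-σ * r * Z)
          - v * Real.exp (-ε * r * Z)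
        < 1 - N₁ * Real.exp (-r * Z) - (N₂ - v) * Real.exp (-σ * r * Z)
          - v * Real.exp (-σ * ε * r * Z)) := by
  have hκ : exp (-r * (log (1 / α) / r)) = α := by
    rw [neg_mul, mul_div_cancel₀ _ hr.ne', one_div, log_inv, neg_neg, exp_log hα.1]
  set κ := log (1 / α) / r
  have hrpow : ∀ Z c : ℝ, exp (-c * r * Z) = exp (-r * Z) ^ c := fun Z c => by
    rw [← exp_mul]; ring_nf
  have hσε : ∀ Z : ℝ, -σ * ε * r * Z = -(σ * ε) * r * Z := fun Z => by ring
  constructor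
  · intro Z hZ hZκ
    have hαx : α < exp (-r * Z) := by
      rw [← hκ, exp_lt_exp, neg_mul, neg_mul, neg_lt_neg_iff, mul_lt_mul_iff_right₀ hr]
      exact hZκ
    have hx1 : exp (-r * Z) < 1 := exp_lt_one_iff.2 (by nlinarith)
    have h := (allocGap_pos_iff hσ hε hα hroot ⟨exp_pos _, hx1⟩).2 hαx
    rw [hσε, hrpow Z σ, hrpow Z ε, hrpow Z (σ * ε)]
    unfold allocGap at h
    linarith [mul_pos hv h]
  · intro Z hκZ
    have hxα : exp (-r * Z) < α := by
      rw [← hκ, exp_lt_exp, neg_mul, neg_mul, neg_lt_neg_iff, mul_lt_mul_iff_right₀ hr]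
      exact hκZ
    have h := (allocGap_neg_iff hσ hε hα hroot ⟨exp_pos _, hxα.trans hα.2⟩).2 hxα
    rw [hσε, hrpow Z σ, hrpow Z ε, hrpow Z (σ * ε)]
    unfold allocGap at h
    linarith [mul_neg_of_pos_of_neg hv h]

/-- Comparison of the two final-size right-hand sides f₁, f₂:
f₁ > f₂ for 0 < Z < κ/r and f₂ > f₁ for Z > κ/r, where κ = ln(1/α). -/
theorem stmt_8 (σ ε α N₁ N₂ v r : ℝ) (hσ : 1 < σ) (hε : ε ∈ Set.Ioo (0:ℝ) 1)
    (hα : α ∈ Set.Ioo (0:ℝ) 1) (hroot : α - α ^ σ - α ^ ε + α ^ (σ * ε) = 0)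
    (hN₁ : 0 < N₁) (hN₂ : 0 < N₂) (hsum : N₁ + N₂ = 1) (hv : 0 < v) (hr : 0 < r) :
    (∀ Z : ℝ, 0 < Z → Z < Real.log (1 / α) / r →
      1 - N₁ * Real.exp (-r * Z) - (N₂ - v) * Real.exp (-σ * r * Z)
          - v * Real.exp (-σ * ε * r * Z)
        < 1 - (N₁ - v) * Real.exp (-r * Z) - N₂ * Real.exp (-σ * r * Z)
          - v * Real.exp (-ε * r * Z)) ∧
    (∀ Z : ℝ, Real.log (1 / α) / r < Z →
      1 - (N₁ - v) * Real.exp (-r * Z) - N₂ * Real.exp (-σ * r * Z)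
          - v * Real.exp (-ε * r * Z)
        < 1 - N₁ * Real.exp (-r * Z) - (N₂ - v) * Real.exp (-σ * r * Z)
          - v * Real.exp (-σ * ε * r * Z)) :=
  stmt_8_general σ ε α N₁ N₂ v r hσ hε hα hroot hv hr
end

section
/- For σ > 1 and ε ∈ (0,1), if x ∈ (0,1) satisfies x^{(σ−1)ε} = (σ−ε)/((1−σε)σ) with 1 − σε > 0, then σ² < 1, a contradiction; hence the equation (ε−1)(ε−σ)x^{ε−σ−1} = (σε−1)σ(ε−1)x^{σ(ε−1)−1} has no solution x ∈ (0,1). -/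
/-!
Since `x ^ a < 1` for `x ∈ (0, 1)` and `a > 0`, the first equation would give
`σ - ε < (1 - σε)σ`, i.e. `ε(σ² - 1) < 0`, which is impossible for `σ > 1`.
Dividing the second equation by `(ε - 1) x ^ (ε - σ - 1)` turns it into the first one;
comparing signs there shows `1 - σε > 0`.
-/

open Real

lemma one_lt_sub_div_one_sub_mul_mul {σ ε : ℝ} (hσ : 1 < σ) (hε : 0 < ε)
    (hσε : 0 < 1 - σ * ε) : 1 < (σ - ε) / ((1 - σ * ε) * σ) := by
  rw [one_lt_div (mul_pos hσε (by linarith))]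
  nlinarith [mul_pos hε (by nlinarith : (0:ℝ) < σ ^ 2 - 1)]

lemma rpow_ne_sub_div_one_sub_mul_mul {σ ε x : ℝ} (hσ : 1 < σ) (hε : 0 < ε)
    (hx : x ∈ Set.Ioo (0:ℝ) 1) (hσε : 0 < 1 - σ * ε) :
    x ^ ((σ - 1) * ε) ≠ (σ - ε) / ((1 - σ * ε) * σ) :=
  ((rpow_lt_one hx.1.le hx.2 (mul_pos (sub_pos.2 hσ) hε)).trans
    (one_lt_sub_div_one_sub_mul_mul hσ hε hσε)).ne

lemma sub_eq_mul_rpow_of_mul_rpow_eq {σ ε x : ℝ} (hx : 0 < x) (hε : ε ≠ 1)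
    (h : (ε - 1) * (ε - σ) * x ^ (ε - σ - 1)
      = (σ * ε - 1) * σ * (ε - 1) * x ^ (σ * (ε - 1) - 1)) :
    ε - σ = (σ * ε - 1) * σ * x ^ ((σ - 1) * ε) := by
  have hsplit : x ^ (σ * (ε - 1) - 1) = x ^ (ε - σ - 1) * x ^ ((σ - 1) * ε) := by
    rw [← rpow_add hx]; ring_nf
  rw [hsplit] at h
  apply mul_left_cancel₀ (sub_ne_zero.2 hε)
  apply mul_right_cancel₀ (rpow_pos_of_pos hx (ε - σ - 1)).ne'
  linear_combination h

/-- Key contradiction step: for σ > 1, ε ∈ (0,1), no x ∈ (0,1) can satisfy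
x^{(σ−1)ε} = (σ−ε)/((1−σε)σ) when 1 − σε > 0 (it would force σ² < 1);
hence (ε−1)(ε−σ)x^{ε−σ−1} = (σε−1)σ(ε−1)x^{σ(ε−1)−1} has no solution in (0,1). -/
theorem stmt_9 (σ ε : ℝ) (hσ : 1 < σ) (hε : ε ∈ Set.Ioo (0:ℝ) 1) :
    (∀ x ∈ Set.Ioo (0:ℝ) 1, 0 < 1 - σ * ε →
      x ^ ((σ - 1) * ε) = (σ - ε) / ((1 - σ * ε) * σ) → False) ∧
    (∀ x ∈ Set.Ioo (0:ℝ) 1,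
      (ε - 1) * (ε - σ) * x ^ (ε - σ - 1)
        ≠ (σ * ε - 1) * σ * (ε - 1) * x ^ (σ * (ε - 1) - 1)) := by
  obtain ⟨hε0, hε1⟩ := hε
  refine ⟨fun x hx hσε => rpow_ne_sub_div_one_sub_mul_mul hσ hε0 hx hσε, fun x hx h => ?_⟩
  have hred := sub_eq_mul_rpow_of_mul_rpow_eq hx.1 hε1.ne h
  have hσε : 0 < 1 - σ * ε := by
    have hneg : (σ * ε - 1) * σ * x ^ ((σ - 1) * ε) < 0 := by linarith
    have := neg_of_mul_neg_left (neg_of_mul_neg_left hneg (rpow_pos_of_pos hx.1 _).le)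
      (by linarith)
    linarith
  apply rpow_ne_sub_div_one_sub_mul_mul hσ hε0 hx hσε
  rw [eq_div_iff (mul_pos hσε (by linarith)).ne']
  linear_combination hred
end

section
/- Let N₁=N₂=1/2, σ > 1, ε ∈ (0,1), 0 < v < 1/2, and let α ∈ (0,1) be the unique root of α − α^σ − α^ε + α^{σε} = 0 with κ = ln(1/α). Define r* = κ / (1 − (1/2 − v)α − (1/2)α^σ − vα^ε). Then for r = r*, the function ζ(v₁) defined implicitly by 1 − (1/2 − v₁)e^{−r*ζ} − (1/2 − v + v₁)e^{−σr*ζ} − v₁e^{−εr*ζ} − (v−v₁)e^{−σεr*ζ} = ζ with ζ ∈ (0,1) is constant: ζ(v₁) = κ/r* for all v₁ ∈ [0, v]. -/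
/-!
The defect `t ↦ 1 - Σ cᵢ e^{-aᵢ t} - t` of the final size equation is strictly concave and vanishes
at `t = 0`, so it has at most one positive zero. At `t = κ / r*` the four exponentials become
`α, α^σ, α^ε, α^{σε}`, and since `κ / r*` is the denominator of `r*`, the defect there equals
`(v - v₁)(α - α^σ - α^ε + α^{σε}) = 0`. Hence `ζ(v₁) = κ / r*`.
-/

open Real Set

lemma strictConvexOn_mul_exp_mul {c a : ℝ} (hc : 0 < c) (ha : a ≠ 0) :
    StrictConvexOn ℝ univ fun t => c * exp (a * t) := by
  refine ⟨convex_univ, fun x _ y _ hxy p q hp hq hpq => ?_⟩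
  have hexp := strictConvexOn_exp.2 (x := a * x) (y := a * y) trivial trivial
    (by simpa [ha] using hxy) hp hq hpq
  simp only [smul_eq_mul] at hexp ⊢
  calc c * exp (a * (p * x + q * y)) = c * exp (p * (a * x) + q * (a * y)) := by ring_nf
    _ < c * (p * exp (a * x) + q * exp (a * y)) := mul_lt_mul_of_pos_left hexp hc
    _ = p * (c * exp (a * x)) + q * (c * exp (a * y)) := by ring

lemma convexOn_mul_exp_mul {c : ℝ} (a : ℝ) (hc : 0 ≤ c) :
    ConvexOn ℝ univ fun t => c * exp (a * t) :=
  (convexOn_exp.comp_linearMap (LinearMap.mul ℝ ℝ a)).smul hc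

theorem StrictConcaveOn.eq_of_map_eq_of_lt {s : Set ℝ} {f : ℝ → ℝ} (hf : StrictConcaveOn ℝ s f)
    {x a b : ℝ} (hx : x ∈ s) (ha : a ∈ s) (hb : b ∈ s) (hxa : x < a) (hxb : x < b)
    (hfa : f a = f x) (hfb : f b = f x) : a = b := by
  have key : ∀ {a b}, b ∈ s → x < a → a < b → f a = f x → f b = f x → False := by
    intro a b hb hxa hab hfa hfb
    have := hf.lt_on_openSegment hx hb (hxa.trans hab).ne
      (by rw [openSegment_eq_Ioo (hxa.trans hab)]; exact ⟨hxa, hab⟩)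
    simp [hfa, hfb] at this
  rcases lt_trichotomy a b with hab | hab | hab
  · exact (key hb hxa hab hfa hfb).elim
  · exact hab
  · exact (key ha hxb hab hfb hfa).elim

noncomputable def finalSizeDefect (σ ε v r v₁ t : ℝ) : ℝ :=
  1 - (1 / 2 - v₁) * exp (-r * t) - (1 / 2 - v + v₁) * exp (-σ * r * t)
    - v₁ * exp (-ε * r * t) - (v - v₁) * exp (-σ * ε * r * t) - t

section finalSizeDefect

variable {σ ε v r v₁ : ℝ}

lemma finalSizeDefect_zero : finalSizeDefect σ ε v r v₁ 0 = 0 := by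
  simp only [finalSizeDefect, mul_zero, exp_zero]
  ring

lemma strictConcaveOn_finalSizeDefect (hr : r ≠ 0) (hv₁ : 0 ≤ v₁) (hv₁v : v₁ ≤ v)
    (hv : v < 1 / 2) : StrictConcaveOn ℝ univ (finalSizeDefect σ ε v r v₁) := by
  have hconvex := ((((strictConvexOn_mul_exp_mul (by linarith : 0 < 1 / 2 - v₁)
    (neg_ne_zero.mpr hr)).add_convexOn
    (convexOn_mul_exp_mul (-σ * r) (by linarith : 0 ≤ 1 / 2 - v + v₁))).add_convexOn
    (convexOn_mul_exp_mul (-ε * r) hv₁)).add_convexOn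
    (convexOn_mul_exp_mul (-σ * ε * r) (sub_nonneg.mpr hv₁v)))
  refine (((concaveOn_const 1 convex_univ).sub (convexOn_id convex_univ)).sub_strictConvexOn
    hconvex).congr fun t _ => ?_
  simp only [finalSizeDefect, Pi.sub_apply, Pi.add_apply, id]
  ring

lemma finalSizeDefect_eq_of_mul_eq_log {α t : ℝ} (hα : 0 < α) (hrt : r * t = log (1 / α)) :
    finalSizeDefect σ ε v r v₁ t = 1 - (1 / 2 - v₁) * α - (1 / 2 - v + v₁) * α ^ σ
      - v₁ * α ^ ε - (v - v₁) * α ^ (σ * ε) - t := by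
  have hexp : ∀ c, exp (-c * r * t) = α ^ c := fun c => by
    rw [rpow_def_of_pos hα, mul_assoc, hrt, one_div, log_inv]
    ring_nf
  have hexp_one : exp (-r * t) = α := by simpa using hexp 1
  rw [finalSizeDefect, hexp_one, hexp, hexp, show -σ * ε * r * t = -(σ * ε) * r * t by ring,
    hexp]

end finalSizeDefect

lemma one_sub_weighted_rpow_pos {v α σ ε : ℝ} (hv : 0 ≤ v) (hv2 : v < 1 / 2)
    (hα : α ∈ Ioo (0 : ℝ) 1) (hσ : 0 < σ) (hε : 0 < ε) :
    0 < 1 - (1 / 2 - v) * α - (1 / 2) * α ^ σ - v * α ^ ε := by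
  have hασ : α ^ σ < 1 := rpow_lt_one hα.1.le hα.2 hσ
  have hαε : α ^ ε < 1 := rpow_lt_one hα.1.le hα.2 hε
  nlinarith [mul_le_of_le_one_right (by linarith : (0 : ℝ) ≤ 1 / 2 - v) hα.2.le,
    mul_le_of_le_one_right hv hαε.le]

theorem stmt_13_general (σ ε v α κ rstar : ℝ) (hσ : 1 < σ) (hε : ε ∈ Set.Ioo (0:ℝ) 1)
    (hv : 0 < v) (hv2 : v < 1 / 2)
    (hα : α ∈ Set.Ioo (0:ℝ) 1) (hroot : α - α ^ σ - α ^ ε + α ^ (σ * ε) = 0)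
    (hκ : κ = Real.log (1 / α))
    (hrstar : rstar = κ / (1 - (1 / 2 - v) * α - (1 / 2) * α ^ σ - v * α ^ ε))
    (ζ : ℝ → ℝ)
    (hζ : ∀ v₁ ∈ Set.Icc 0 v, ζ v₁ ∈ Set.Ioo (0:ℝ) 1 ∧
      1 - (1 / 2 - v₁) * Real.exp (-rstar * ζ v₁)
        - (1 / 2 - v + v₁) * Real.exp (-σ * rstar * ζ v₁)
        - v₁ * Real.exp (-ε * rstar * ζ v₁)
        - (v - v₁) * Real.exp (-σ * ε * rstar * ζ v₁) = ζ v₁) :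
    ∀ v₁ ∈ Set.Icc 0 v, ζ v₁ = κ / rstar := by
  rintro v₁ ⟨hv₁, hv₁v⟩
  obtain ⟨hζ_mem, hζ_eq⟩ := hζ v₁ ⟨hv₁, hv₁v⟩
  have hκ_pos : 0 < κ := hκ ▸ log_pos (one_lt_one_div hα.1 hα.2)
  have hD := one_sub_weighted_rpow_pos hv.le hv2 hα (zero_lt_one.trans hσ) hε.1
  have hrstar_pos : 0 < rstar := hrstar ▸ div_pos hκ_pos hD
  have hκ_div : κ / rstar = 1 - (1 / 2 - v) * α - (1 / 2) * α ^ σ - v * α ^ ε := by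
    rw [hrstar, div_div_cancel₀ hκ_pos.ne']
  have hconcave := strictConcaveOn_finalSizeDefect (σ := σ) (ε := ε) hrstar_pos.ne' hv₁ hv₁v hv2
  refine hconcave.eq_of_map_eq_of_lt (mem_univ 0) (mem_univ _) (mem_univ _) hζ_mem.1
    (div_pos hκ_pos hrstar_pos) ?_ ?_
  · rw [finalSizeDefect_zero, finalSizeDefect]
    linarith
  · rw [finalSizeDefect_zero, finalSizeDefect_eq_of_mul_eq_log hα.1
      (by rw [mul_div_cancel₀ _ hrstar_pos.ne', hκ]), hκ_div]
    linear_combination (v₁ - v) * hroot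

/-- At r = r*, the final size ζ(v₁) is constant, equal to κ/r*, for all
allocations v₁ ∈ [0,v] (equal group sizes N₁ = N₂ = 1/2). -/
theorem stmt_13 (σ ε v α κ rstar : ℝ) (hσ : 1 < σ) (hε : ε ∈ Set.Ioo (0:ℝ) 1)
    (hv : 0 < v) (hv2 : v < 1 / 2)
    (hα : α ∈ Set.Ioo (0:ℝ) 1) (hroot : α - α ^ σ - α ^ ε + α ^ (σ * ε) = 0)
    (huniq : ∀ x ∈ Set.Ioo (0:ℝ) 1, x - x ^ σ - x ^ ε + x ^ (σ * ε) = 0 → x = α)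
    (hκ : κ = Real.log (1 / α))
    (hrstar : rstar = κ / (1 - (1 / 2 - v) * α - (1 / 2) * α ^ σ - v * α ^ ε))
    (ζ : ℝ → ℝ)
    (hζ : ∀ v₁ ∈ Set.Icc 0 v, ζ v₁ ∈ Set.Ioo (0:ℝ) 1 ∧
      1 - (1 / 2 - v₁) * Real.exp (-rstar * ζ v₁)
        - (1 / 2 - v + v₁) * Real.exp (-σ * rstar * ζ v₁)
        - v₁ * Real.exp (-ε * rstar * ζ v₁)
        - (v - v₁) * Real.exp (-σ * ε * rstar * ζ v₁) = ζ v₁) :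
    ∀ v₁ ∈ Set.Icc 0 v, ζ v₁ = κ / rstar :=
  stmt_13_general σ ε v α κ rstar hσ hε hv hv2 hα hroot hκ hrstar ζ hζ
end

section
/- Let σ > 1, ε ∈ (0,1), N₁+N₂=1, 0 < v < min(N₁,N₂), and let α ∈ (0,1) solve α − α^σ − α^ε + α^{σε} = 0, κ = ln(1/α), r* = κ/(1 − (N₁−v)α − N₂α^σ − vα^ε). If v₁* ∈ (0,v) is a critical point of ζ (ζ′(v₁*) = 0), where ζ(v₁) is the final size under allocation (v₁, v−v₁) and r > r₂ is the transmission ratio, then rζ(v₁*) = κ and r = r*. -/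
open Real Filter Topology

/-!
The final-size equation is affine in the allocation `v₁`, with slope
`e^{-rζ} - e^{-σrζ} - e^{-εrζ} + e^{-σεrζ}` as a function of `ζ`. Differentiating it at a critical
point of `ζ` kills every term carrying `ζ'`, so this slope vanishes there; writing it as
`g(e^{-rζ})` with `g x = x - x^σ - x^ε + x^{σε}`, uniqueness of the root of `g` gives
`e^{-rζ} = α`, i.e. `rζ = κ`. Feeding `e^{-rζ} = α` and `g α = 0` back into the equation removes
`v₁` and leaves `ζ = 1 - (N₁ - v)α - N₂α^σ - vα^ε`, whence `r = κ / ζ = r*`.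
-/

theorem HasDerivAt.eq_zero_of_eventuallyEq_affine {ζ A B : ℝ → ℝ} {x₀ : ℝ}
    (hζ : HasDerivAt ζ 0 x₀) (hA : DifferentiableAt ℝ A (ζ x₀))
    (hB : DifferentiableAt ℝ B (ζ x₀))
    (heq : ζ =ᶠ[𝓝 x₀] fun x => A (ζ x) + x * B (ζ x)) :
    B (ζ x₀) = 0 := by
  have hA' := hA.hasDerivAt.comp x₀ hζ
  have hB' := hB.hasDerivAt.comp x₀ hζ
  have hrhs : HasDerivAt (fun x => A (ζ x) + x * B (ζ x)) (B (ζ x₀)) x₀ := by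
    simpa using hA'.fun_add ((hasDerivAt_id x₀).fun_mul hB')
  exact (hζ.unique (hrhs.congr_of_eventuallyEq heq)).symm

theorem exp_neg_mul_mul_eq_rpow (c r z : ℝ) : exp (-c * r * z) = exp (-r * z) ^ c := by
  rw [← exp_mul]
  ring_nf

theorem finalSize_slope_eq_zero_of_deriv_eq_zero {σ ε N₁ N₂ v r x₀ : ℝ} {ζ : ℝ → ℝ}
    (hdiff : DifferentiableAt ℝ ζ x₀) (hcrit : deriv ζ x₀ = 0)
    (hfix : ∀ᶠ x in 𝓝 x₀, 1 - (N₁ - x) * exp (-r * ζ x) - (N₂ - v + x) * exp (-σ * r * ζ x)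
      - x * exp (-ε * r * ζ x) - (v - x) * exp (-σ * ε * r * ζ x) = ζ x) :
    exp (-r * ζ x₀) - exp (-r * ζ x₀) ^ σ - exp (-r * ζ x₀) ^ ε
      + exp (-r * ζ x₀) ^ (σ * ε) = 0 := by
  have hζ : HasDerivAt ζ 0 x₀ := hcrit ▸ hdiff.hasDerivAt
  have hslope := hζ.eq_zero_of_eventuallyEq_affine
    (A := fun z => 1 - N₁ * exp (-r * z) - (N₂ - v) * exp (-σ * r * z) - v * exp (-σ * ε * r * z))
    (B := fun z => exp (-r * z) - exp (-σ * r * z) - exp (-ε * r * z) + exp (-σ * ε * r * z))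
    (by fun_prop) (by fun_prop) (hfix.mono fun x hx => by rw [← hx]; ring)
  rwa [neg_mul σ ε, exp_neg_mul_mul_eq_rpow σ, exp_neg_mul_mul_eq_rpow ε,
    exp_neg_mul_mul_eq_rpow (σ * ε)] at hslope

theorem stmt_14_general (σ ε N₁ N₂ v α κ rstar r : ℝ) (hσ : 1 < σ)
    (hε : ε ∈ Set.Ioo (0:ℝ) 1)
    (hv : 0 < v) (hvmin : v < min N₁ N₂)
    (hroot : α - α ^ σ - α ^ ε + α ^ (σ * ε) = 0)
    (huniq : ∀ x ∈ Set.Ioo (0:ℝ) 1, x - x ^ σ - x ^ ε + x ^ (σ * ε) = 0 → x = α)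
    (hκ : κ = Real.log (1 / α))
    (hrstar : rstar = κ / (1 - (N₁ - v) * α - N₂ * α ^ σ - v * α ^ ε))
    (hr : 1 / (N₁ + σ * (N₂ - v) + σ * ε * v) < r)
    (ζ : ℝ → ℝ) (hdiff : Differentiable ℝ ζ)
    (hζ : ∀ v₁ ∈ Set.Icc 0 v, ζ v₁ ∈ Set.Ioo (0:ℝ) 1 ∧
      1 - (N₁ - v₁) * Real.exp (-r * ζ v₁)
        - (N₂ - v + v₁) * Real.exp (-σ * r * ζ v₁)
        - v₁ * Real.exp (-ε * r * ζ v₁)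
        - (v - v₁) * Real.exp (-σ * ε * r * ζ v₁) = ζ v₁)
    (v₁star : ℝ) (hv₁star : v₁star ∈ Set.Ioo 0 v)
    (hcrit : deriv ζ v₁star = 0) :
    r * ζ v₁star = κ ∧ r = rstar := by
  obtain ⟨⟨hζ₀, -⟩, hfix⟩ := hζ v₁star (Set.Ioo_subset_Icc_self hv₁star)
  have hr₀ : 0 < r := by
    have hN₁ : 0 < N₁ := hv.trans (hvmin.trans_le (min_le_left _ _))
    have hN₂v : 0 < N₂ - v := sub_pos.mpr (hvmin.trans_le (min_le_right _ _))
    have : 0 < N₁ + σ * (N₂ - v) + σ * ε * v := by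
      have := hε.1
      have : 0 < σ := one_pos.trans hσ
      positivity
    exact (one_div_pos.mpr this).trans hr
  have hslope := finalSize_slope_eq_zero_of_deriv_eq_zero (hdiff v₁star) hcrit <|
    Filter.mem_of_superset (isOpen_Ioo.mem_nhds hv₁star) fun x hx =>
      (hζ x (Set.Ioo_subset_Icc_self hx)).2
  have hXα : exp (-r * ζ v₁star) = α :=
    huniq _ ⟨exp_pos _, exp_lt_one_iff.mpr (by rw [neg_mul, neg_lt_zero]; exact mul_pos hr₀ hζ₀)⟩ hslope
  have hrζ : r * ζ v₁star = κ := by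
    rw [hκ, one_div, log_inv, ← hXα, log_exp, neg_mul, neg_neg]
  refine ⟨hrζ, ?_⟩
  have hζval : ζ v₁star = 1 - (N₁ - v) * α - N₂ * α ^ σ - v * α ^ ε := by
    rw [neg_mul σ ε, exp_neg_mul_mul_eq_rpow σ, exp_neg_mul_mul_eq_rpow ε,
      exp_neg_mul_mul_eq_rpow (σ * ε), hXα] at hfix
    linear_combination -hfix - (v - v₁star) * hroot
  rw [hrstar, ← hζval, ← hrζ, mul_div_cancel_right₀ _ hζ₀.ne']

/-- If v₁* ∈ (0,v) is a critical point of the final size ζ under allocation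
(v₁, v−v₁) at transmission ratio r > r₂, then rζ(v₁*) = κ and r = r*. -/
theorem stmt_14 (σ ε N₁ N₂ v α κ rstar r : ℝ) (hσ : 1 < σ)
    (hε : ε ∈ Set.Ioo (0:ℝ) 1) (hsum : N₁ + N₂ = 1)
    (hN₁ : 0 < N₁) (hN₂ : 0 < N₂) (hv : 0 < v) (hvmin : v < min N₁ N₂)
    (hα : α ∈ Set.Ioo (0:ℝ) 1) (hroot : α - α ^ σ - α ^ ε + α ^ (σ * ε) = 0)
    (huniq : ∀ x ∈ Set.Ioo (0:ℝ) 1, x - x ^ σ - x ^ ε + x ^ (σ * ε) = 0 → x = α)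
    (hκ : κ = Real.log (1 / α))
    (hrstar : rstar = κ / (1 - (N₁ - v) * α - N₂ * α ^ σ - v * α ^ ε))
    (hr : 1 / (N₁ + σ * (N₂ - v) + σ * ε * v) < r)
    (ζ : ℝ → ℝ) (hdiff : Differentiable ℝ ζ)
    (hζ : ∀ v₁ ∈ Set.Icc 0 v, ζ v₁ ∈ Set.Ioo (0:ℝ) 1 ∧
      1 - (N₁ - v₁) * Real.exp (-r * ζ v₁)
        - (N₂ - v + v₁) * Real.exp (-σ * r * ζ v₁)
        - v₁ * Real.exp (-ε * r * ζ v₁)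
        - (v - v₁) * Real.exp (-σ * ε * r * ζ v₁) = ζ v₁)
    (v₁star : ℝ) (hv₁star : v₁star ∈ Set.Ioo 0 v)
    (hcrit : deriv ζ v₁star = 0) :
    r * ζ v₁star = κ ∧ r = rstar :=
  stmt_14_general σ ε N₁ N₂ v α κ rstar r hσ hε hv hvmin hroot huniq hκ hrstar hr ζ hdiff hζ v₁star
    hv₁star hcrit
end

section
/- Let σ > 1, ε ∈ (0,1), and α ∈ (0,1) the root of α − α^σ − α^ε + α^{σε} = 0. Then the transition value R₀* = (N₁ + N₂σ)·ln(1/α) / (1 − N₁α − N₂α^σ − v(α^ε − α)) satisfies R₀* → ∞ as ε → 0⁺ (with σ, N₁, N₂, v fixed, N₁+N₂=1, 0 < v < min(N₁,N₂)). -/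
/-!
Write `t = σ - 1` and `L = log (1/α)`. The defining equation says
`α (1 - α^t) = α^ε (1 - α^(tε))`, and the right-hand side is at most `1 - α^(tε) ≤ ε t L`.
Since `α^t (1 + t L) ≤ 1`, this forces `α ≤ ε (1 + t L)`, and with `α L ≤ 1` it gives
`α² ≤ σ ε`. Hence `α(ε) → 0⁺`, so `log (1/α) → ∞`, while the denominator of `R₀*` stays in `(0, 1]`.
-/

open Filter Real Set Topology

namespace Real

lemma one_sub_rpow_le_neg_mul_log {a : ℝ} (ha : 0 < a) (s : ℝ) : 1 - a ^ s ≤ -(s * log a) := by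
  rw [rpow_def_of_pos ha, mul_comm]
  linarith [add_one_le_exp (s * log a)]

lemma rpow_mul_one_sub_mul_log_le_one {a : ℝ} (ha : 0 < a) (s : ℝ) :
    a ^ s * (1 - s * log a) ≤ 1 := by
  rw [rpow_def_of_pos ha, mul_comm (log a)]
  calc exp (s * log a) * (1 - s * log a) ≤ exp (s * log a) * exp (-(s * log a)) :=
        mul_le_mul_of_nonneg_left (one_sub_le_exp_neg _) (exp_pos _).le
    _ = 1 := by rw [← exp_add, add_neg_cancel, exp_zero]

lemma mul_log_one_div_le_one_sub {a : ℝ} (ha : 0 < a) : a * log (1 / a) ≤ 1 - a := by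
  have h := mul_le_mul_of_nonneg_left (log_le_sub_one_of_pos (one_div_pos.2 ha)) ha.le
  rwa [mul_sub, mul_one_div_cancel ha.ne', mul_one] at h

end Real

section Root

variable {σ ε a : ℝ}

lemma le_mul_one_add_log_of_root (hσ : 1 < σ) (hε : 0 ≤ ε) (ha : a ∈ Ioo (0 : ℝ) 1)
    (h : a - a ^ σ - a ^ ε + a ^ (σ * ε) = 0) :
    a ≤ ε * (1 + (σ - 1) * log (1 / a)) := by
  obtain ⟨ha0, ha1⟩ := ha
  have hL : log a = -log (1 / a) := by rw [one_div, log_inv, neg_neg]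
  set t := σ - 1 with ht
  set L := log (1 / a)
  have htL : 0 < t * L := mul_pos (by linarith) (log_pos (one_lt_one_div ha0 ha1))
  have hfactor : a * (1 - a ^ t) = a ^ ε * (1 - a ^ (t * ε)) := by
    have hσ' : a ^ σ = a * a ^ t := by rw [← rpow_one_add' ha0.le (by linarith), ht]; ring_nf
    have hσε : a ^ (σ * ε) = a ^ ε * a ^ (t * ε) := by rw [← rpow_add ha0, ht]; ring_nf
    rw [hσ', hσε] at h
    linarith
  have hsmall : a * (1 - a ^ t) ≤ ε * (t * L) :=
    calc a * (1 - a ^ t) = a ^ ε * (1 - a ^ (t * ε)) := hfactor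
      _ ≤ 1 - a ^ (t * ε) :=
        mul_le_of_le_one_left (by linarith [rpow_le_one ha0.le ha1.le (by positivity : 0 ≤ t * ε)])
          (rpow_le_one ha0.le ha1.le hε)
      _ ≤ -(t * ε * log a) := one_sub_rpow_le_neg_mul_log ha0 (t * ε)
      _ = ε * (t * L) := by rw [hL]; ring
  have hlarge : t * L ≤ (1 - a ^ t) * (1 + t * L) := by
    have := rpow_mul_one_sub_mul_log_le_one ha0 t
    rw [hL] at this
    linarith
  -- multiply `hsmall` by `1 + tL` and cancel the positive factor `tL`
  refine le_of_mul_le_mul_right ?_ htL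
  calc a * (t * L) ≤ a * (1 - a ^ t) * (1 + t * L) := by
        rw [mul_assoc]; exact mul_le_mul_of_nonneg_left hlarge ha0.le
    _ ≤ ε * (t * L) * (1 + t * L) := mul_le_mul_of_nonneg_right hsmall (by linarith)
    _ = ε * (1 + t * L) * (t * L) := by ring

lemma sq_le_mul_of_root (hσ : 1 < σ) (hε : 0 ≤ ε) (ha : a ∈ Ioo (0 : ℝ) 1)
    (h : a - a ^ σ - a ^ ε + a ^ (σ * ε) = 0) : a ^ 2 ≤ σ * ε := by
  have haL := mul_log_one_div_le_one_sub ha.1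
  calc a ^ 2 = a * a := sq a
    _ ≤ a * (ε * (1 + (σ - 1) * log (1 / a))) :=
      mul_le_mul_of_nonneg_left (le_mul_one_add_log_of_root hσ hε ha h) ha.1.le
    _ = ε * (a + (σ - 1) * (a * log (1 / a))) := by ring
    _ ≤ ε * (1 + (σ - 1) * 1) := by gcongr <;> linarith [ha.1, ha.2]
    _ = σ * ε := by ring

end Root

lemma tendsto_root_nhdsGT_zero {σ : ℝ} (hσ : 1 < σ) {α : ℝ → ℝ}
    (hα : ∀ ε ∈ Ioo (0 : ℝ) 1, α ε ∈ Ioo (0 : ℝ) 1 ∧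
      α ε - α ε ^ σ - α ε ^ ε + α ε ^ (σ * ε) = 0) :
    Tendsto α (𝓝[>] 0) (𝓝[>] 0) := by
  have hIoo : ∀ᶠ ε in 𝓝[>] (0 : ℝ), ε ∈ Ioo (0 : ℝ) 1 := Ioo_mem_nhdsGT one_pos
  have hsqrt : Tendsto (fun ε => √(σ * ε)) (𝓝[>] 0) (𝓝 0) := by
    have : Continuous fun ε => √(σ * ε) := by fun_prop
    exact (this.tendsto' 0 0 (by simp)).mono_left nhdsWithin_le_nhds
  refine tendsto_nhdsWithin_iff.2 ⟨?_, hIoo.mono fun ε hε => (hα ε hε).1.1⟩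
  refine tendsto_of_tendsto_of_tendsto_of_le_of_le' tendsto_const_nhds hsqrt ?_ ?_
  · filter_upwards [hIoo] with ε hε using (hα ε hε).1.1.le
  · filter_upwards [hIoo] with ε hε
    obtain ⟨ha, hroot⟩ := hα ε hε
    exact le_sqrt_of_sq_le (sq_le_mul_of_root hσ hε.1.le ha hroot)

lemma transition_denom_mem_Ioc {N₁ N₂ v σ ε a : ℝ} (hsum : N₁ + N₂ = 1) (hN₁ : 0 ≤ N₁)
    (hN₂ : 0 ≤ N₂) (hv : 0 ≤ v) (hv₁ : v < 1) (hσ : 1 ≤ σ) (hε : ε ∈ Icc (0 : ℝ) 1)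
    (ha : a ∈ Ioo (0 : ℝ) 1) :
    1 - N₁ * a - N₂ * a ^ σ - v * (a ^ ε - a) ∈ Ioc 0 1 := by
  obtain ⟨ha0, ha1⟩ := ha
  have haσ : a ^ σ ≤ a := by
    simpa using rpow_le_rpow_of_exponent_ge ha0 ha1.le hσ
  have haε : a ≤ a ^ ε := by
    simpa using rpow_le_rpow_of_exponent_ge ha0 ha1.le hε.2
  have haε1 : a ^ ε ≤ 1 := rpow_le_one ha0.le ha1.le hε.1
  have haσ0 : 0 < a ^ σ := rpow_pos_of_pos ha0 σ
  constructor
  · nlinarith [mul_le_mul_of_nonneg_left haσ hN₂, mul_le_mul_of_nonneg_left haε1 hv]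
  · nlinarith [mul_nonneg hv (sub_nonneg.2 haε)]

lemma Filter.Tendsto.atTop_div_of_pos_of_le_one {ι : Type*} {l : Filter ι} {f g : ι → ℝ}
    (hf : Tendsto f l atTop) (hg : ∀ᶠ i in l, g i ∈ Ioc 0 1) :
    Tendsto (fun i => f i / g i) l atTop := by
  refine tendsto_atTop_mono' l ?_ hf
  filter_upwards [hg, hf.eventually_ge_atTop 0] with i ⟨hg0, hg1⟩ hf0
  exact (le_div_iff₀ hg0).2 (mul_le_of_le_one_right hf0 hg1)

/-- The transition value R₀* tends to infinity as the vaccine leakiness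
ε → 0⁺ (perfect vaccine limit), where α = α(ε) is the root in (0,1) of
α − α^σ − α^ε + α^{σε} = 0. -/
theorem stmt_17 (σ N₁ N₂ v : ℝ) (hσ : 1 < σ) (hsum : N₁ + N₂ = 1)
    (hN₁ : 0 < N₁) (hN₂ : 0 < N₂) (hv : 0 < v) (hvmin : v < min N₁ N₂)
    (α : ℝ → ℝ)
    (hα : ∀ ε ∈ Set.Ioo (0:ℝ) 1, α ε ∈ Set.Ioo (0:ℝ) 1 ∧
      α ε - α ε ^ σ - α ε ^ ε + α ε ^ (σ * ε) = 0) :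
    Filter.Tendsto (fun ε => (N₁ + N₂ * σ) * Real.log (1 / α ε) /
        (1 - N₁ * α ε - N₂ * α ε ^ σ - v * (α ε ^ ε - α ε)))
      (nhdsWithin 0 (Set.Ioi 0)) Filter.atTop := by
  have hlog : Tendsto (fun ε => log (1 / α ε)) (𝓝[>] 0) atTop := by
    simpa only [Function.comp_def, one_div, log_inv] using
      tendsto_neg_atBot_atTop.comp (tendsto_log_nhdsGT_zero.comp (tendsto_root_nhdsGT_zero hσ hα))
  have hcoef : 0 < N₁ + N₂ * σ := by nlinarith
  refine (hlog.const_mul_atTop hcoef).atTop_div_of_pos_of_le_one ?_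
  filter_upwards [Ioo_mem_nhdsGT (one_pos : (0 : ℝ) < 1)] with ε hε
  have hv₁ : v < 1 := by linarith [min_le_left N₁ N₂]
  exact transition_denom_mem_Ioc hsum hN₁.le hN₂.le hv.le hv₁ hσ.le (Ioo_subset_Icc_self hε) (hα ε hε).1
end
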